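/- Let p ∈ frontier Z be a simple nondegenerate point with associated neighborhood U_p. Suppose there exist a compact set K ⊆ U_p that is a neighborhood of p and ρ > 0 such that {x ∈ K | f x = t} is nonempty for every t ∈ (0, ρ) and the function β^K is NOT Lebesgue integrable on (0, ρ). Then there exist ρ' > 0, an open neighborhood U of p, and b : ℝ → ℝ continuous and strictly positive on (0, ρ'] with t ↦ (b t)⁻¹ NOT Lebesgue integrable on (0, ρ'), such that ‖∇f x‖ ≤ b (f x) for every x ∈ U with 0 < f x ≤ ρ'. -/

import Mathlib

/-!
`betaK f K t` is the infimum of the weight `‖∇f‖⁻¹` over the compact level set `K ∩ {f = t}`,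
on which `∇f` is continuous and nonzero. Hence `β := betaK f K` is lower semicontinuous on
`(0, ρ)` and bounded above and away from `0` on each `[a, ρ)`, `a > 0`; and any continuous
positive minorant `h` of `β` with `∫₀ h = ∞` gives the bound with `b = h⁻¹`.

To build `h`, approximate `β` from below by its Lipschitz inf-convolutions
`g_n t = inf_s β s + n |t - s|`, which increase to `β` by lower semicontinuity. On the pieces
`{t | ⌊ρ / t⌋ = k}`, where `β` is bounded, monotone convergence yields `N k` with
`∫ g_{N k}` within `ε k` of `∫ β` (`∑ ε k < ∞`), so `t ↦ g_{N ⌊ρ/t⌋} t` still has infinite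
integral; since this index is locally bounded, a partition of unity inserts a continuous
function between it and `β`.
-/

open Set MeasureTheory

variable {n : ℕ}

noncomputable def betaK (f : EuclideanSpace ℝ (Fin n) → ℝ)
    (K : Set (EuclideanSpace ℝ (Fin n))) (t : ℝ) : ℝ :=
  sInf {y : ℝ | ∃ x ∈ K, f x = t ∧ y = ‖gradient f x‖⁻¹}

open Filter Topology

section InfConvolution

variable {g : ℝ → ℝ} {R : ℝ}

noncomputable def infConv (g : ℝ → ℝ) (R : ℝ) (n : ℕ) (t : ℝ) : ℝ :=
  sInf ((fun s => g s + n * |t - s|) '' Ioo 0 R)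

theorem le_infConv (hR : 0 < R) {n : ℕ} {t c : ℝ}
    (h : ∀ s ∈ Ioo 0 R, c ≤ g s + n * |t - s|) : c ≤ infConv g R n t :=
  le_csInf ((nonempty_Ioo.2 hR).image _) (by rintro _ ⟨s, hs, rfl⟩; exact h s hs)

theorem infConv_le_add (h0 : ∀ t, 0 ≤ g t) (n : ℕ) (t : ℝ) {s : ℝ} (hs : s ∈ Ioo 0 R) :
    infConv g R n t ≤ g s + n * |t - s| :=
  csInf_le ⟨0, by rintro _ ⟨s, -, rfl⟩; have := h0 s; positivity⟩ ⟨s, hs, rfl⟩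

theorem infConv_le_self (h0 : ∀ t, 0 ≤ g t) (n : ℕ) {t : ℝ} (ht : t ∈ Ioo 0 R) :
    infConv g R n t ≤ g t := by
  simpa using infConv_le_add h0 n t ht

theorem infConv_mono (h0 : ∀ t, 0 ≤ g t) (hR : 0 < R) (t : ℝ) :
    Monotone fun n => infConv g R n t :=
  fun m n hmn => le_infConv hR fun s hs => (infConv_le_add h0 m t hs).trans (by gcongr)

theorem lipschitzWith_infConv (h0 : ∀ t, 0 ≤ g t) (hR : 0 < R) (n : ℕ) :
    LipschitzWith n (infConv g R n) := by
  refine LipschitzWith.of_le_add_mul n fun t t' =>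
    sub_le_iff_le_add.1 <| le_infConv hR fun s hs => ?_
  have hts : |t - s| ≤ |t - t'| + |t' - s| := abs_sub_le t t' s
  have := infConv_le_add h0 n t hs
  rw [Real.dist_eq]
  push_cast
  nlinarith [n.cast_nonneg (α := ℝ)]

theorem continuous_infConv (h0 : ∀ t, 0 ≤ g t) (hR : 0 < R) (n : ℕ) :
    Continuous (infConv g R n) :=
  (lipschitzWith_infConv h0 hR n).continuous

theorem tendsto_infConv (h0 : ∀ t, 0 ≤ g t) (hR : 0 < R) (hlsc : LowerSemicontinuousOn g (Ioo 0 R))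
    {t : ℝ} (ht : t ∈ Ioo 0 R) : Tendsto (fun n => infConv g R n t) atTop (𝓝 (g t)) := by
  refine tendsto_order.2 ⟨fun a ha => ?_, fun a ha =>
    Eventually.of_forall fun n => (infConv_le_self h0 n ht).trans_lt ha⟩
  obtain ⟨a', haa', ha't⟩ := exists_between ha
  obtain ⟨δ, hδ, hgδ⟩ :=
    Metric.eventually_nhds_iff.1 (eventually_nhdsWithin_iff.1 (hlsc t ht a' ha't))
  obtain ⟨N, hN⟩ := exists_nat_gt (a' / δ)
  have hN' : a' ≤ N * δ := by rw [div_lt_iff₀ hδ] at hN; exact hN.le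
  have hlow : a' ≤ infConv g R N t := le_infConv hR fun s hs => by
    rcases lt_or_ge |t - s| δ with hts | hts
    · have := hgδ (by rwa [Real.dist_eq, abs_sub_comm]) hs
      have : (0:ℝ) ≤ N * |t - s| := by positivity
      linarith
    · have := h0 s
      nlinarith [N.cast_nonneg (α := ℝ)]
  exact eventually_atTop.2 ⟨N, fun n hn => haa'.trans_le (hlow.trans (infConv_mono h0 hR t hn))⟩

theorem infConv_pos (h0 : ∀ t, 0 ≤ g t) (hR : 0 < R)
    (hlb : ∀ a > 0, ∃ c > 0, ∀ t ∈ Ico a R, c ≤ g t) {t : ℝ} (ht : 0 < t) :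
    0 < infConv g R 1 t := by
  obtain ⟨c, hc, hcg⟩ := hlb (t / 2) (half_pos ht)
  refine (lt_min hc (half_pos ht)).trans_le (le_infConv hR fun s hs => ?_)
  have := h0 s
  rcases le_or_gt (t / 2) s with hts | hts
  · have := hcg s ⟨hts, hs.2⟩
    have := abs_nonneg (t - s)
    linarith [min_le_left c (t / 2)]
  · have : t / 2 ≤ |t - s| := by rw [abs_of_pos (by linarith)]; linarith
    linarith [min_le_right c (t / 2)]

end InfConvolution

def harmonicPiece (R : ℝ) (k : ℕ) : Set ℝ := Ioo 0 R ∩ (fun t => ⌊R / t⌋₊) ⁻¹' {k}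

theorem measurableSet_harmonicPiece (R : ℝ) (k : ℕ) : MeasurableSet (harmonicPiece R k) :=
  measurableSet_Ioo.inter
    ((Nat.measurable_floor.comp (measurable_const.div measurable_id)) (measurableSet_singleton k))

theorem pairwise_disjoint_harmonicPiece (R : ℝ) :
    Pairwise (Function.onFun Disjoint (harmonicPiece R)) :=
  fun _ _ hij => ((disjoint_singleton.2 hij).preimage _).mono inter_subset_right inter_subset_right

theorem iUnion_harmonicPiece (R : ℝ) : ⋃ k, harmonicPiece R k = Ioo 0 R := by
  ext t
  simp [harmonicPiece]

theorem harmonicPiece_subset {R : ℝ} (k : ℕ) : harmonicPiece R k ⊆ Ico (R / (k + 1)) R :=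
  fun t ⟨ht, hk⟩ => ⟨by
    have := Nat.lt_floor_add_one (R / t)
    rw [show ⌊R / t⌋₊ = k from hk, div_lt_iff₀ ht.1] at this
    rw [div_le_iff₀ (by positivity)]
    linarith, ht.2⟩

theorem not_integrableOn_Ioo_of_lintegral_eq_top {h : ℝ → ℝ} {r R C : ℝ}
    (hr : r ∈ Ioc 0 R) (hC : ∀ t ∈ Ico r R, h t ≤ C)
    (htop : ∫⁻ t in Ioo 0 R, ENNReal.ofReal (h t) = ⊤) :
    ¬ IntegrableOn h (Ioo 0 r) := by
  intro hint
  rw [← Ioo_union_Ico_eq_Ioo hr.1 hr.2, lintegral_union measurableSet_Ico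
    (disjoint_left.2 fun t h1 h2 => h2.1.not_gt h1.2), ENNReal.add_eq_top] at htop
  refine htop.elim hint.lintegral_lt_top.ne (ne_top_of_le_ne_top ?_
    (setLIntegral_mono' measurableSet_Ico fun t ht => ENNReal.ofReal_le_ofReal (hC t ht)))
  rw [setLIntegral_const]
  exact ENNReal.mul_ne_top ENNReal.ofReal_ne_top measure_Ico_lt_top.ne

section Minorant

variable {g : ℝ → ℝ} {R : ℝ}

theorem setLIntegral_ofReal_eq_top_of_not_integrableOn (hR : 0 < R) (h0 : ∀ t, 0 ≤ g t)
    (hlsc : LowerSemicontinuousOn g (Ioo 0 R)) (hni : ¬ IntegrableOn g (Ioo 0 R)) :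
    ∫⁻ t in Ioo 0 R, ENNReal.ofReal (g t) = ⊤ := by
  by_contra hfin
  refine hni ⟨aestronglyMeasurable_of_tendsto_ae atTop
    (fun n => (continuous_infConv h0 hR n).aestronglyMeasurable)
    ((ae_restrict_mem measurableSet_Ioo).mono fun t ht => tendsto_infConv h0 hR hlsc ht), ?_⟩
  exact (hasFiniteIntegral_iff_ofReal (Eventually.of_forall h0)).2 (lt_top_iff_ne_top.2 hfin)

theorem exists_tsum_lintegral_infConv_eq_top (hR : 0 < R) (h0 : ∀ t, 0 ≤ g t)
    (hub : ∀ a > 0, ∃ C, ∀ t ∈ Ico a R, g t ≤ C)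
    (hlsc : LowerSemicontinuousOn g (Ioo 0 R))
    (htop : ∫⁻ t in Ioo 0 R, ENNReal.ofReal (g t) = ⊤) :
    ∃ N : ℕ → ℕ,
      ∑' k, ∫⁻ t in harmonicPiece R k, ENNReal.ofReal (infConv g R (N k) t) = ⊤ := by
  have hsup : ∀ k, ∫⁻ t in harmonicPiece R k, ENNReal.ofReal (g t) =
      ⨆ n, ∫⁻ t in harmonicPiece R k, ENNReal.ofReal (infConv g R n t) := by
    intro k
    rw [← lintegral_iSup (fun n => (continuous_infConv h0 hR n).measurable.ennreal_ofReal)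
      fun m n hmn t => ENNReal.ofReal_le_ofReal (infConv_mono h0 hR t hmn)]
    refine setLIntegral_congr_fun (measurableSet_harmonicPiece R k) fun t ht => ?_
    exact (iSup_eq_of_tendsto (fun m n hmn => ENNReal.ofReal_le_ofReal (infConv_mono h0 hR t hmn))
      (ENNReal.tendsto_ofReal (tendsto_infConv h0 hR hlsc ht.1))).symm
  have hfin : ∀ k, ∫⁻ t in harmonicPiece R k, ENNReal.ofReal (g t) ≠ ⊤ := by
    intro k
    obtain ⟨C, hC⟩ := hub (R / (k + 1)) (by positivity)
    refine ne_top_of_le_ne_top ?_ (setLIntegral_mono' (measurableSet_harmonicPiece R k)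
      fun t ht => ENNReal.ofReal_le_ofReal (hC t (harmonicPiece_subset k ht)))
    rw [setLIntegral_const]
    exact ENNReal.mul_ne_top ENNReal.ofReal_ne_top
      ((measure_mono (harmonicPiece_subset k)).trans_lt measure_Ico_lt_top).ne
  obtain ⟨ε, hε, hεsum⟩ := ENNReal.exists_pos_sum_of_countable one_ne_zero ℕ
  have hN : ∀ k, ∃ n, ∫⁻ t in harmonicPiece R k, ENNReal.ofReal (g t) <
      (∫⁻ t in harmonicPiece R k, ENNReal.ofReal (infConv g R n t)) + ε k := by
    intro k
    have := ENNReal.lt_add_right (hfin k) (ENNReal.coe_ne_zero.2 (hε k).ne')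
    rwa [hsup k, ENNReal.iSup_add, lt_iSup_iff, ← hsup k] at this
  choose N hN using hN
  refine ⟨N, by_contra fun hne => ?_⟩
  have hle : ∫⁻ t in Ioo 0 R, ENNReal.ofReal (g t) ≤
      (∑' k, ∫⁻ t in harmonicPiece R k, ENNReal.ofReal (infConv g R (N k) t)) +
        ∑' k, (ε k : ENNReal) := by
    rw [← iUnion_harmonicPiece R, lintegral_iUnion (measurableSet_harmonicPiece R)
      (pairwise_disjoint_harmonicPiece R), ← ENNReal.tsum_add]
    exact ENNReal.tsum_le_tsum fun k => (hN k).le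
  rw [htop, top_le_iff, ENNReal.add_eq_top] at hle
  exact hle.elim hne (hεsum.trans ENNReal.one_lt_top).ne

theorem exists_continuousOn_infConv_le_le (hR : 0 < R) (h0 : ∀ t, 0 ≤ g t) (ν : ℝ → ℕ)
    (hν : ∀ x ∈ Ioo 0 R, ∃ C, ∀ᶠ t in 𝓝 x, ν t ≤ C) :
    ∃ h : ℝ → ℝ, ContinuousOn h (Ioo 0 R) ∧
      ∀ t ∈ Ioo 0 R, infConv g R (ν t) t ≤ h t ∧ h t ≤ g t := by
  obtain ⟨φ, hφ⟩ := exists_continuous_forall_mem_convex_of_local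
    (t := fun x : Ioo 0 R => Icc (infConv g R (ν x) x) (g x)) (fun _ => convex_Icc _ _) fun x => by
      obtain ⟨C, hC⟩ := hν x x.2
      exact ⟨_, continuous_subtype_val.continuousAt.preimage_mem_nhds hC,
        fun y => infConv g R C y,
        ((continuous_infConv h0 hR C).comp continuous_subtype_val).continuousOn,
        fun y hy => ⟨infConv_mono h0 hR y hy, infConv_le_self h0 C y.2⟩⟩
  classical
  refine ⟨fun t => if ht : t ∈ Ioo 0 R then φ ⟨t, ht⟩ else 0, ?_,
    fun t ht => by simpa [ht] using hφ ⟨t, ht⟩⟩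
  rw [continuousOn_iff_continuous_domRestrict]
  convert φ.continuous
  ext x
  simp [x.2.1, x.2.2]

theorem exists_continuousOn_minorant_not_integrableOn (hR : 0 < R) (h0 : ∀ t, 0 ≤ g t)
    (hlb : ∀ a > 0, ∃ c > 0, ∀ t ∈ Ico a R, c ≤ g t)
    (hub : ∀ a > 0, ∃ C, ∀ t ∈ Ico a R, g t ≤ C)
    (hlsc : LowerSemicontinuousOn g (Ioo 0 R)) (hni : ¬ IntegrableOn g (Ioo 0 R)) :
    ∃ h : ℝ → ℝ, ContinuousOn h (Ioo 0 R) ∧ (∀ t ∈ Ioo 0 R, 0 < h t ∧ h t ≤ g t) ∧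
      ∀ r ∈ Ioc 0 R, ¬ IntegrableOn h (Ioo 0 r) := by
  obtain ⟨N, hN⟩ := exists_tsum_lintegral_infConv_eq_top hR h0 hub hlsc
    (setLIntegral_ofReal_eq_top_of_not_integrableOn hR h0 hlsc hni)
  -- the index `N ⌊R / t⌋₊ + 1` is constant on each harmonic piece and bounded near each point
  obtain ⟨h, hcont, hh⟩ :=
    exists_continuousOn_infConv_le_le hR h0 (fun t => N ⌊R / t⌋₊ + 1)
    fun x hx => ⟨(Finset.range (⌊R / (x / 2)⌋₊ + 1)).sup N + 1, by
      filter_upwards [Ioi_mem_nhds (half_lt_self hx.1)] with t ht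
      have : ⌊R / t⌋₊ ≤ ⌊R / (x / 2)⌋₊ :=
        Nat.floor_le_floor (div_le_div_of_nonneg_left hR.le (half_pos hx.1) (le_of_lt ht))
      exact Nat.add_le_add_right (Finset.le_sup (Finset.mem_range_succ_iff.2 this)) 1⟩
  refine ⟨h, hcont, fun t ht => ⟨(infConv_pos h0 hR hlb ht.1).trans_le
    ((infConv_mono h0 hR t (Nat.le_add_left 1 _)).trans (hh t ht).1), (hh t ht).2⟩,
    fun r hr => ?_⟩
  have htop : ∫⁻ t in Ioo 0 R, ENNReal.ofReal (h t) = ⊤ := by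
    refine top_unique (hN.symm.trans_le ?_)
    rw [← iUnion_harmonicPiece R, lintegral_iUnion (measurableSet_harmonicPiece R)
      (pairwise_disjoint_harmonicPiece R)]
    refine ENNReal.tsum_le_tsum fun k => setLIntegral_mono' (measurableSet_harmonicPiece R k)
      fun t ⟨ht, hk⟩ => ENNReal.ofReal_le_ofReal ?_
    refine (infConv_mono h0 hR t (Nat.le_succ _)).trans ?_
    simpa only [mem_preimage, mem_singleton_iff.1 hk] using (hh t ht).1
  obtain ⟨C, hC⟩ := hub r hr.1
  exact not_integrableOn_Ioo_of_lintegral_eq_top hr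
    (fun t ht => ((hh t ⟨hr.1.trans_le ht.1, ht.2⟩).2).trans (hC t ht)) htop

end Minorant

section LevelInf

variable {X : Type*} {F w : X → ℝ} {K : Set X} {ρ : ℝ}

noncomputable def levelInf (F w : X → ℝ) (K : Set X) (t : ℝ) : ℝ :=
  sInf {y | ∃ x ∈ K, F x = t ∧ y = w x}

theorem levelInf_nonneg (hw0 : ∀ x, 0 ≤ w x) (t : ℝ) : 0 ≤ levelInf F w K t :=
  Real.sInf_nonneg (by rintro _ ⟨x, -, -, rfl⟩; exact hw0 x)

theorem levelInf_le (hw0 : ∀ x, 0 ≤ w x) {x : X} (hx : x ∈ K) :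
    levelInf F w K (F x) ≤ w x :=
  csInf_le ⟨0, by rintro _ ⟨y, -, -, rfl⟩; exact hw0 y⟩ ⟨x, hx, rfl, rfl⟩

theorem le_levelInf {t c : ℝ} (hne : {x ∈ K | F x = t}.Nonempty)
    (h : ∀ x ∈ K, F x = t → c ≤ w x) : c ≤ levelInf F w K t :=
  le_csInf (let ⟨x, hx, hxt⟩ := hne; ⟨_, x, hx, hxt, rfl⟩)
    (by rintro _ ⟨x, hx, hxt, rfl⟩; exact h x hx hxt)

variable [TopologicalSpace X]

theorem isCompact_inter_preimage_Icc (hK : IsCompact K) (hF : Continuous F) (a b : ℝ) :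
    IsCompact (K ∩ F ⁻¹' Icc a b) :=
  hK.inter_right (isClosed_Icc.preimage hF)

theorem exists_levelInf_le (hK : IsCompact K) (hF : Continuous F)
    (hw : ContinuousOn w (K ∩ F ⁻¹' Ioi 0)) (hw0 : ∀ x, 0 ≤ w x)
    (hlevel : ∀ t ∈ Ioo 0 ρ, {x ∈ K | F x = t}.Nonempty) {a : ℝ} (ha : 0 < a) :
    ∃ C, ∀ t ∈ Ico a ρ, levelInf F w K t ≤ C := by
  obtain ⟨C, hC⟩ := (isCompact_inter_preimage_Icc hK hF a ρ).exists_bound_of_continuousOn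
    (hw.mono fun x hx => ⟨hx.1, ha.trans_le hx.2.1⟩)
  refine ⟨C, fun t ht => ?_⟩
  obtain ⟨x, hx, rfl⟩ := hlevel t ⟨ha.trans_le ht.1, ht.2⟩
  exact (levelInf_le hw0 hx).trans ((le_abs_self _).trans (hC x ⟨hx, ht.1, ht.2.le⟩))

theorem exists_pos_le_levelInf (hK : IsCompact K) (hF : Continuous F)
    (hw : ContinuousOn w (K ∩ F ⁻¹' Ioi 0)) (hwpos : ∀ x ∈ K, 0 < F x → 0 < w x)
    (hlevel : ∀ t ∈ Ioo 0 ρ, {x ∈ K | F x = t}.Nonempty) {a : ℝ} (ha : 0 < a) :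
    ∃ c > 0, ∀ t ∈ Ico a ρ, c ≤ levelInf F w K t := by
  have hS : K ∩ F ⁻¹' Icc a ρ ⊆ K ∩ F ⁻¹' Ioi 0 :=
    fun x hx => ⟨hx.1, ha.trans_le hx.2.1⟩
  obtain ⟨M, hM⟩ := (isCompact_inter_preimage_Icc hK hF a ρ).exists_bound_of_continuousOn
    ((hw.mono hS).inv₀ fun x hx => (hwpos x hx.1 (hS hx).2).ne')
  refine ⟨(max M 1)⁻¹, by positivity, fun t ht =>
    le_levelInf (hlevel t ⟨ha.trans_le ht.1, ht.2⟩) fun x hx hxt => ?_⟩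
  have hwx := hwpos x hx (hxt ▸ ha.trans_le ht.1)
  rw [inv_le_comm₀ (by positivity) hwx]
  have hxS : x ∈ K ∩ F ⁻¹' Icc a ρ := ⟨hx, show F x ∈ Icc a ρ from hxt ▸ ⟨ht.1, ht.2.le⟩⟩
  exact (le_abs_self _).trans ((hM x hxS).trans (le_max_left M 1))

theorem lowerSemicontinuousOn_levelInf [T2Space X] (hK : IsCompact K) (hF : Continuous F)
    (hw : ContinuousOn w (K ∩ F ⁻¹' Ioi 0)) (hw0 : ∀ x, 0 ≤ w x)
    (hlevel : ∀ t ∈ Ioo 0 ρ, {x ∈ K | F x = t}.Nonempty) :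
    LowerSemicontinuousOn (levelInf F w K) (Ioo 0 ρ) := by
  intro t ht y hy
  obtain ⟨y', hyy', hy't⟩ := exists_between hy
  set A := (K ∩ F ⁻¹' Icc (t / 2) ρ) ∩ w ⁻¹' Iic y'
  have hS := isCompact_inter_preimage_Icc hK hF (t / 2) ρ
  have hA : IsCompact A := hS.of_isClosed_subset
    ((hw.mono fun x hx => ⟨hx.1, (half_pos ht.1).trans_le hx.2.1⟩).preimage_isClosed_of_isClosed
      hS.isClosed isClosed_Iic) inter_subset_left
  have htA : t ∉ F '' A := by
    rintro ⟨x, hx, rfl⟩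
    exact ((levelInf_le hw0 hx.1.1).trans hx.2).not_gt hy't
  filter_upwards [nhdsWithin_le_nhds ((hA.image hF).isClosed.isOpen_compl.mem_nhds htA),
    nhdsWithin_le_nhds (Ioi_mem_nhds (half_lt_self ht.1)), self_mem_nhdsWithin] with s hsA hsa hs
  refine hyy'.trans_le (le_levelInf (hlevel s hs) fun x hx hxs => le_of_not_ge fun hwx => hsA ?_)
  exact ⟨x, ⟨⟨hx, show F x ∈ Icc (t / 2) ρ from hxs ▸ ⟨le_of_lt hsa, hs.2.le⟩⟩, hwx⟩, hxs⟩

end LevelInf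

theorem betaK_eq_levelInf (f : EuclideanSpace ℝ (Fin n) → ℝ)
    (K : Set (EuclideanSpace ℝ (Fin n))) :
    betaK f K = levelInf f (fun x => ‖gradient f x‖⁻¹) K :=
  rfl

theorem beta_not_integrable_implies_opposite_gradient_inequality_general (n : ℕ)
    (f : EuclideanSpace ℝ (Fin n) → ℝ)
    (hf : Continuous f)
    (hC1 : ContDiffOn ℝ 1 f (f ⁻¹' {0})ᶜ)
    (p : EuclideanSpace ℝ (Fin n))
    (Up : Set (EuclideanSpace ℝ (Fin n)))
    (hsimple : ∀ x ∈ Up, f x ≠ 0 → gradient f x ≠ 0)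
    (K : Set (EuclideanSpace ℝ (Fin n))) (hK : IsCompact K) (hKsub : K ⊆ Up)
    (hKnhds : K ∈ nhds p)
    (ρ : ℝ) (hρ : 0 < ρ)
    (hlevel : ∀ t ∈ Ioo (0:ℝ) ρ, {x ∈ K | f x = t}.Nonempty)
    (hbeta_not_int : ¬ IntegrableOn (betaK f K) (Ioo 0 ρ)) :
    ∃ ρ' > (0:ℝ), ∃ U : Set (EuclideanSpace ℝ (Fin n)), IsOpen U ∧ p ∈ U ∧
      ∃ b : ℝ → ℝ, ContinuousOn b (Ioc 0 ρ') ∧ (∀ t ∈ Ioc (0:ℝ) ρ', 0 < b t) ∧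
        ¬ IntegrableOn (fun t => (b t)⁻¹) (Ioo 0 ρ') ∧
        ∀ x ∈ U, 0 < f x → f x ≤ ρ' → ‖gradient f x‖ ≤ b (f x) := by
  have hgrad : ∀ x ∈ K, 0 < f x → 0 < ‖gradient f x‖ :=
    fun x hx hfx => norm_pos_iff.2 (hsimple x (hKsub hx) hfx.ne')
  have hgrad_cont : ContinuousOn (gradient f) (f ⁻¹' {0})ᶜ :=
    (InnerProductSpace.toDual ℝ _).symm.continuous.comp_continuousOn
      (hC1.continuousOn_fderiv_of_isOpen (isClosed_singleton.preimage hf).isOpen_compl le_rfl)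
  have hw : ContinuousOn (fun x => ‖gradient f x‖⁻¹) (K ∩ f ⁻¹' Ioi 0) :=
    (hgrad_cont.norm.mono fun x hx => hx.2.ne').inv₀ fun x hx => (hgrad x hx.1 hx.2).ne'
  have hw0 : ∀ x, 0 ≤ ‖gradient f x‖⁻¹ := fun x => by positivity
  have hwpos : ∀ x ∈ K, 0 < f x → 0 < ‖gradient f x‖⁻¹ :=
    fun x hx hfx => inv_pos.2 (hgrad x hx hfx)
  rw [betaK_eq_levelInf] at hbeta_not_int
  obtain ⟨h, hcont, hpos, hni⟩ := exists_continuousOn_minorant_not_integrableOn hρ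
    (levelInf_nonneg hw0) (fun _ ha => exists_pos_le_levelInf hK hf hw hwpos hlevel ha)
    (fun _ ha => exists_levelInf_le hK hf hw hw0 hlevel ha)
    (lowerSemicontinuousOn_levelInf hK hf hw hw0 hlevel) hbeta_not_int
  have hsub : Ioc 0 (ρ / 2) ⊆ Ioo 0 ρ := Ioc_subset_Ioo_right (half_lt_self hρ)
  refine ⟨ρ / 2, half_pos hρ, interior K, isOpen_interior, mem_interior_iff_mem_nhds.2 hKnhds,
    fun t => (h t)⁻¹, (hcont.mono hsub).inv₀ fun t ht => (hpos t (hsub ht)).1.ne',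
    fun t ht => inv_pos.2 (hpos t (hsub ht)).1,
    by simpa only [inv_inv] using hni (ρ / 2) ⟨half_pos hρ, half_le_self hρ.le⟩,
    fun x hx hfx hfxρ => ?_⟩
  have hxK := interior_subset hx
  rw [← le_inv_comm₀ (hpos _ (hsub ⟨hfx, hfxρ⟩)).1 (hgrad x hxK hfx)]
  exact (hpos _ (hsub ⟨hfx, hfxρ⟩)).2.trans (levelInf_le hw0 hxK)

theorem beta_not_integrable_implies_opposite_gradient_inequality (n : ℕ) (hn : 1 ≤ n)
    (f : EuclideanSpace ℝ (Fin n) → ℝ)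
    (hf : Continuous f) (hf0 : ∀ x, 0 ≤ f x)
    (hZ : (f ⁻¹' {0}).Nonempty)
    (hC1 : ContDiffOn ℝ 1 f (f ⁻¹' {0})ᶜ)
    (p : EuclideanSpace ℝ (Fin n)) (hp : p ∈ frontier (f ⁻¹' {0}))
    (Up : Set (EuclideanSpace ℝ (Fin n))) (hUp : IsOpen Up) (hpUp : p ∈ Up)
    (hsimple : ∀ x ∈ Up, f x ≠ 0 → gradient f x ≠ 0)
    (K : Set (EuclideanSpace ℝ (Fin n))) (hK : IsCompact K) (hKsub : K ⊆ Up)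
    (hKnhds : K ∈ nhds p)
    (ρ : ℝ) (hρ : 0 < ρ)
    (hlevel : ∀ t ∈ Ioo (0:ℝ) ρ, {x ∈ K | f x = t}.Nonempty)
    (hbeta_not_int : ¬ IntegrableOn (betaK f K) (Ioo 0 ρ)) :
    ∃ ρ' > (0:ℝ), ∃ U : Set (EuclideanSpace ℝ (Fin n)), IsOpen U ∧ p ∈ U ∧
      ∃ b : ℝ → ℝ, ContinuousOn b (Ioc 0 ρ') ∧ (∀ t ∈ Ioc (0:ℝ) ρ', 0 < b t) ∧
        ¬ IntegrableOn (fun t => (b t)⁻¹) (Ioo 0 ρ') ∧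
        ∀ x ∈ U, 0 < f x → f x ≤ ρ' → ‖gradient f x‖ ≤ b (f x) :=
  beta_not_integrable_implies_opposite_gradient_inequality_general n f hf hC1 p Up hsimple K hK
    hKsub hKnhds ρ hρ hlevel hbeta_not_int
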